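/- In a rooted phylogenetic network with no redundant nodes that has n leaves, the number of reticulation components is at most n + p − 1, where p is the number of tree-node components, because the unique child of the lowest reticulate node of each reticulation component is either a leaf or the root of a non-root tree-node component, and this assignment is injective. -/

import Mathlib

/-!
Send each reticulation component to the child of its lowest reticulate node. That child has
indegree 1, so the assignment is injective, and it is a leaf or the root of a tree-node component
other than the root's. A tree-node component has a single root, since inside it every node has
at most one parent, so there are only `p - 1` such roots.
-/

open Relation

variable {V : Type*}

/-- Indegree of a node in a digraph given by an edge relation. -/
noncomputable def indeg (E : V → V → Prop) (v : V) : ℕ := Set.ncard {u | E u v}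

/-- Outdegree of a node in a digraph given by an edge relation. -/
noncomputable def outdeg (E : V → V → Prop) (v : V) : ℕ := Set.ncard {w | E v w}

/-- A directed path from `x` to `y` in the digraph `E`, recorded as the list of its nodes. -/
def IsDirPathE (E : V → V → Prop) (x y : V) (p : List V) : Prop :=
  p.head? = some x ∧ p.getLast? = some y ∧ p.Chain' E

/-- `Dom E root x y`: `x` is a dominator of `y`, i.e. `x` is an ancestor of `y` and every
directed path from `root` to `y` contains `x`. -/
def Dom (E : V → V → Prop) (root x y : V) : Prop :=
  Relation.TransGen E x y ∧ ∀ p, IsDirPathE E root y p → x ∈ p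

/-- A rooted phylogenetic network: a rooted acyclic digraph with a unique root of indegree 0
and outdegree ≥ 1, in which every non-root node has indegree 1 or outdegree 1, and every node
is reachable from the root. -/
structure RPN (V : Type*) [Fintype V] where
  E : V → V → Prop
  root : V
  acyclic : ∀ v, ¬ Relation.TransGen E v v
  root_indeg : indeg E root = 0
  root_outdeg : 1 ≤ outdeg E root
  degree_cond : ∀ v, v ≠ root → indeg E v = 1 ∨ outdeg E v = 1
  reachable : ∀ v, Relation.ReflTransGen E root v

namespace RPN

variable [Fintype V] (N : RPN V)

/-- A leaf: indegree 1 and outdegree 0. -/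
def isLeaf (v : V) : Prop := indeg N.E v = 1 ∧ outdeg N.E v = 0

/-- A reticulate node: indegree at least 2. -/
def isRetic (v : V) : Prop := 2 ≤ indeg N.E v

/-- A tree node: the root, or a node of indegree 1 and outdegree at least 2. -/
def isTreeN (v : V) : Prop := v = N.root ∨ (indeg N.E v = 1 ∧ 2 ≤ outdeg N.E v)

/-- A redundant node: indegree 1 and outdegree 1. -/
def isRedund (v : V) : Prop := indeg N.E v = 1 ∧ outdeg N.E v = 1

/-- A directed path from `x` to `y` in `N`. -/
def IsDirPath (x y : V) (p : List V) : Prop := IsDirPathE N.E x y p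

/-- `x` lies on every directed path from the root to `y`. -/
def Dominates (x y : V) : Prop := ∀ p, N.IsDirPath N.root y p → x ∈ p

/-- A node is visible if it lies on every root-to-`ℓ` path for some leaf `ℓ`. -/
def Visible (x : V) : Prop := ∃ ℓ, N.isLeaf ℓ ∧ N.Dominates x ℓ

/-- Tree-child: every non-leaf node has a child that is a leaf, a tree node, or a redundant
node. -/
def TreeChild : Prop :=
  ∀ u, ¬ N.isLeaf u → ∃ c, N.E u c ∧ (N.isLeaf c ∨ N.isTreeN c ∨ N.isRedund c)

/-- Edge of the subgraph induced by the tree nodes. -/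
def treeE (u v : V) : Prop := N.E u v ∧ N.isTreeN u ∧ N.isTreeN v

/-- Undirected adjacency in the subgraph induced by the tree nodes. -/
def treeAdj (u v : V) : Prop := N.isTreeN u ∧ N.isTreeN v ∧ (N.E u v ∨ N.E v u)

/-- The tree-node component of a tree node `u`. -/
def treeComp (u : V) : Set V := {v | Relation.ReflTransGen N.treeAdj u v}

/-- Edge of the subgraph induced by the reticulate nodes. -/
def reticE (u v : V) : Prop := N.E u v ∧ N.isRetic u ∧ N.isRetic v

/-- Undirected adjacency in the subgraph induced by the reticulate nodes. -/
def reticAdj (u v : V) : Prop := N.isRetic u ∧ N.isRetic v ∧ (N.E u v ∨ N.E v u)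

/-- The reticulation component of a reticulate node `u`. -/
def reticComp (u : V) : Set V := {v | Relation.ReflTransGen N.reticAdj u v}

open Classical in
/-- The compression quotient map: each tree node is sent to its tree-node component, each
reticulate node to its reticulation component, and every other node to itself (as a
singleton set). -/
noncomputable def comp (u : V) : Set V :=
  if N.isTreeN u then N.treeComp u else if N.isRetic u then N.reticComp u else {u}

/-- Edge relation of the compression `N̄`: an edge between the (distinct) images of the
endpoints of each edge of `N`. -/
def compE (A B : Set V) : Prop :=
  A ≠ B ∧ ∃ u v, N.E u v ∧ N.comp u = A ∧ N.comp v = B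

/-- `N` is binary: reticulate nodes have indegree exactly 2, tree nodes outdegree exactly 2. -/
def Binary : Prop :=
  (∀ v, N.isRetic v → indeg N.E v = 2) ∧ (∀ v, N.isTreeN v → outdeg N.E v = 2)

/-- `N` is galled: every reticulate node `r` has a tree-node ancestor `w` with two internally
disjoint directed paths from `w` to `r` in which all nodes except `r` are tree nodes. -/
def Galled : Prop :=
  ∀ r, N.isRetic r → ∃ w p q, N.isTreeN w ∧
    N.IsDirPath w r p ∧ N.IsDirPath w r q ∧ p ≠ q ∧
    (∀ x ∈ p.tail.dropLast, x ∉ q.tail.dropLast) ∧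
    (∀ x ∈ p, x ≠ r → N.isTreeN x) ∧ (∀ x ∈ q, x ≠ r → N.isTreeN x)

/-- The spanning subgraph determined by a switching `s` choosing one parent of each
reticulate node. -/
def SpanE (s : V → V) (u v : V) : Prop := N.E u v ∧ (N.isRetic v → u = s v)

/-- `S` is displayed (as a softwired cluster) at `u`: for some switching, the set of leaves
below `u` in the resulting spanning tree is exactly `S`. -/
def DisplayedAt (S : Set V) (u : V) : Prop :=
  ∃ s : V → V, (∀ v, N.isRetic v → N.E (s v) v) ∧
    {ℓ | N.isLeaf ℓ ∧ Relation.ReflTransGen (N.SpanE s) u ℓ} = S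

/-- An isolated reticulate node: neither its parents nor its child are reticulate. -/
def IsolatedRetic (w : V) : Prop :=
  N.isRetic w ∧ (∀ x, N.E x w → ¬ N.isRetic x) ∧ (∀ y, N.E w y → ¬ N.isRetic y)

end RPN

namespace Relation

variable {α : Type*} {r : α → α → Prop}

theorem wellFounded_of_acyclic [Finite α] (h : ∀ a, ¬ TransGen r a a) : WellFounded r :=
  have : Std.Irrefl (TransGen r) := ⟨h⟩
  Subrelation.wf TransGen.single (Finite.wellFounded_of_trans_of_irrefl (TransGen r))

theorem exists_minimal_reflTransGen (hwf : WellFounded r) (x : α) :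
    ∃ t, ReflTransGen r t x ∧ ∀ a, ¬ r a t := by
  obtain ⟨t, htx, hmin⟩ := hwf.has_min {t | ReflTransGen r t x} ⟨x, .refl⟩
  exact ⟨t, htx, fun a hat => hmin a (htx.head hat) hat⟩

theorem ReflTransGen.eq_of_minimal {s t : α} (h : ReflTransGen r s t) (ht : ∀ a, ¬ r a t) :
    s = t := by
  rcases h.cases_tail with rfl | ⟨a, -, hat⟩
  · rfl
  · exact absurd hat (ht a)

/-- Unique predecessors make the ancestors of a node a chain. -/
theorem minimal_ancestor_unique (hu : Relator.LeftUnique r) {s t x : α}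
    (hs : ReflTransGen r s x) (hs₀ : ∀ a, ¬ r a s)
    (ht : ReflTransGen r t x) (ht₀ : ∀ a, ¬ r a t) : s = t := by
  have hu' : Relator.RightUnique (Function.swap r) := fun _ _ _ h₁ h₂ => hu h₁ h₂
  rcases (reflTransGen_swap.2 hs).total_of_right_unique hu' (reflTransGen_swap.2 ht)
    with h | h
  · exact ((reflTransGen_swap.1 h).eq_of_minimal hs₀).symm
  · exact (reflTransGen_swap.1 h).eq_of_minimal ht₀

theorem minimal_eq_of_reflTransGen_symmGen (hwf : WellFounded r) (hu : Relator.LeftUnique r)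
    {s t : α} (hs₀ : ∀ a, ¬ r a s) (ht₀ : ∀ a, ¬ r a t)
    (h : ReflTransGen (SymmGen r) s t) : s = t := by
  suffices ReflTransGen r s t from this.eq_of_minimal ht₀
  clear ht₀
  induction h with
  | refl => rfl
  | @tail x y _ hxy ih =>
    rcases hxy with hxy | hyx
    · exact ih.tail hxy
    -- The minimal ancestor of `y` is also one of `x`, hence it is `s`.
    · obtain ⟨m, hmy, hm₀⟩ := exists_minimal_reflTransGen hwf _
      rwa [minimal_ancestor_unique hu (hmy.tail hyx) hm₀ ih hs₀] at hmy

end Relation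

namespace RPN

variable [Fintype V] (N : RPN V)

def IsTreeCompRoot (t : V) : Prop := N.isTreeN t ∧ ∀ a, ¬ N.treeE a t

variable {N}

lemma not_E_root (u : V) : ¬ N.E u N.root := by
  intro h
  have := (Set.ncard_pos (s := {u | N.E u N.root})).2 ⟨u, h⟩
  rw [← indeg, N.root_indeg] at this
  omega

lemma indeg_eq_one_of_E {u v : V} (hE : N.E u v) (hv : ¬ N.isRetic v) : indeg N.E v = 1 := by
  have := (Set.ncard_pos (s := {u | N.E u v})).2 ⟨u, hE⟩
  rw [← indeg] at this
  rw [isRetic] at hv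
  omega

lemma eq_of_E_of_indeg_eq_one {u u' v : V} (h : indeg N.E v = 1) (hu : N.E u v)
    (hu' : N.E u' v) : u = u' :=
  (Set.ncard_le_one (Set.toFinite {u | N.E u v})).1 h.le u hu u' hu'

lemma isRetic.ne_root {v : V} (h : N.isRetic v) : v ≠ N.root := by
  rintro rfl
  have := N.root_indeg
  rw [isRetic] at h
  omega

lemma isRetic.outdeg_eq_one {v : V} (h : N.isRetic v) : outdeg N.E v = 1 := by
  refine (N.degree_cond v h.ne_root).resolve_left fun h1 => ?_
  rw [isRetic] at h
  omega

lemma isRetic.not_isTreeN {v : V} (h : N.isRetic v) : ¬ N.isTreeN v := by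
  rintro (hv | hv)
  · exact h.ne_root hv
  · rw [isRetic] at h
    omega

lemma wellFounded_E : WellFounded N.E :=
  Relation.wellFounded_of_acyclic N.acyclic

lemma wellFounded_swap_E : WellFounded (Function.swap N.E) :=
  Relation.wellFounded_of_acyclic fun a h => N.acyclic a (Relation.transGen_swap.1 h)

lemma treeE_leftUnique : Relator.LeftUnique N.treeE := by
  rintro a b c ⟨hac, -, hc⟩ ⟨hbc, -, -⟩
  have hdeg : indeg N.E c = 1 := (hc.resolve_left fun h => not_E_root a (h ▸ hac)).1
  exact eq_of_E_of_indeg_eq_one hdeg hac hbc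

lemma treeComp_injOn : Set.InjOn N.treeComp {t | N.IsTreeCompRoot t} := by
  rintro s ⟨-, hs₀⟩ t ⟨-, ht₀⟩ hst
  have hsym : N.treeAdj ≤ Relation.SymmGen N.treeE := by
    rintro u v ⟨hu, hv, huv | hvu⟩
    exacts [Or.inl ⟨huv, hu, hv⟩, Or.inr ⟨hvu, hv, hu⟩]
  have hst' : t ∈ N.treeComp s := hst ▸ Relation.ReflTransGen.refl
  exact Relation.minimal_eq_of_reflTransGen_symmGen
    (Subrelation.wf (fun h => h.1) wellFounded_E) treeE_leftUnique hs₀ ht₀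
    (Relation.ReflTransGen.mono hsym _ _ hst')

lemma ncard_nonroot_treeCompRoots_lt :
    {t | N.IsTreeCompRoot t ∧ t ≠ N.root}.ncard <
      {C : Set V | ∃ u, N.isTreeN u ∧ C = N.treeComp u}.ncard := by
  have hroot : N.IsTreeCompRoot N.root := ⟨Or.inl rfl, fun a h => not_E_root a h.1⟩
  have hinsert :
      insert N.root {t | N.IsTreeCompRoot t ∧ t ≠ N.root} = {t | N.IsTreeCompRoot t} := by
    ext t
    by_cases ht : t = N.root <;> simp [ht, hroot]
  rw [← Nat.add_one_le_iff, ← Set.ncard_insert_of_notMem (fun h => h.2 rfl), hinsert]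
  exact Set.ncard_le_ncard_of_injOn N.treeComp (fun t ht => ⟨t, ht.1, rfl⟩) treeComp_injOn

lemma exists_lowest_of_isRetic {u : V} (hu : N.isRetic u) :
    ∃ r, N.isRetic r ∧ N.reticComp u = N.reticComp r ∧ ∀ c, ¬ N.reticE r c := by
  obtain ⟨r, hru, hr₀⟩ := Relation.exists_minimal_reflTransGen
    (Subrelation.wf (fun h => h.1) wellFounded_swap_E : WellFounded (Function.swap N.reticE)) u
  have hur : Relation.ReflTransGen N.reticE u r := Relation.reflTransGen_swap.1 hru
  have hr : N.isRetic r := by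
    rcases hur.cases_tail with rfl | ⟨a, -, h⟩
    exacts [hu, h.2.2]
  refine ⟨r, hr, ?_, hr₀⟩
  ext v
  refine ⟨fun hv => (Relation.ReflTransGen.mono ?_ _ _ hru).trans hv,
    fun hv => (Relation.ReflTransGen.mono ?_ _ _ hur).trans hv⟩
  · exact fun a b h => ⟨h.2.2, h.2.1, Or.inr h.1⟩
  · exact fun a b h => ⟨h.2.1, h.2.2, Or.inl h.1⟩

lemma isLeaf_or_isTreeCompRoot_of_E (hnr : ∀ v, ¬ N.isRedund v) {r c : V}
    (hr : N.isRetic r) (hE : N.E r c) (hc : ¬ N.isRetic c) :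
    N.isLeaf c ∨ (N.IsTreeCompRoot c ∧ c ≠ N.root) := by
  have hdeg := indeg_eq_one_of_E hE hc
  by_cases hleaf : N.isLeaf c
  · exact Or.inl hleaf
  have hout : 2 ≤ outdeg N.E c := by
    have := hnr c
    simp only [isLeaf, isRedund, hdeg, true_and] at hleaf this
    omega
  refine Or.inr ⟨⟨Or.inr ⟨hdeg, hout⟩, fun a ha => ?_⟩,
    fun h => not_E_root r (h ▸ hE)⟩
  exact hr.not_isTreeN (eq_of_E_of_indeg_eq_one hdeg ha.1 hE ▸ ha.2.1)

lemma ncard_reticComps_le (hnr : ∀ v, ¬ N.isRedund v) :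
    {C : Set V | ∃ u, N.isRetic u ∧ C = N.reticComp u}.ncard ≤
      {v | N.isLeaf v}.ncard + {t | N.IsTreeCompRoot t ∧ t ≠ N.root}.ncard := by
  have hchild : ∀ C ∈ {C : Set V | ∃ u, N.isRetic u ∧ C = N.reticComp u}, ∃ r c,
      N.E r c ∧ indeg N.E c = 1 ∧ C = N.reticComp r ∧
        c ∈ {v | N.isLeaf v} ∪ {t | N.IsTreeCompRoot t ∧ t ≠ N.root} := by
    rintro C ⟨u, hu, rfl⟩
    obtain ⟨r, hr, hur, hr₀⟩ := exists_lowest_of_isRetic hu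
    obtain ⟨c, hE⟩ := (Set.ncard_pos (s := {c | N.E r c})).1
      (by rw [← outdeg, hr.outdeg_eq_one]; omega)
    have hc : ¬ N.isRetic c := fun hc => hr₀ c ⟨hE, hr, hc⟩
    exact ⟨r, c, hE, indeg_eq_one_of_E hE hc, hur, isLeaf_or_isTreeCompRoot_of_E hnr hr hE hc⟩
  have : Nonempty V := ⟨N.root⟩
  choose! r c hE hdeg hC hc using hchild
  refine (Set.ncard_le_ncard_of_injOn c hc ?_).trans (Set.ncard_union_le _ _)
  intro C₁ h₁ C₂ h₂ h
  rw [hC C₁ h₁, hC C₂ h₂,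
    eq_of_E_of_indeg_eq_one (hdeg C₁ h₁) (hE C₁ h₁) (h ▸ hE C₂ h₂)]

end RPN

/-- In a network with no redundant nodes, with `n` leaves and `p` tree-node
components, the number `q` of reticulation components satisfies `q ≤ n + p - 1`. -/
theorem stmt19 [Fintype V] (N : RPN V) (hnr : ∀ v, ¬ N.isRedund v) (n p q : ℕ)
    (hn : n = Set.ncard {v | N.isLeaf v})
    (hp : p = Set.ncard {C : Set V | ∃ u, N.isTreeN u ∧ C = N.treeComp u})
    (hq : q = Set.ncard {C : Set V | ∃ u, N.isRetic u ∧ C = N.reticComp u}) :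
    q ≤ n + p - 1 := by
  have := N.ncard_reticComps_le hnr
  have := N.ncard_nonroot_treeCompRoots_lt
  omega
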